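/- Let v = Σ_{g∈G} g ∈ ℝ[G] and let w ∈ ℝ[G] be such that {v, w} is linearly independent. For each g ∈ G let L_g ⊆ ℝ[G] be the linear span of v and g•w, and set Y = ℝ[G] \ ⋃_{g∈G} L_g. Let π : ℝ[G] → ℝ[G]/ℝv be the linear quotient map (a continuous map of finite-dimensional real topological vector spaces). Then π(Y) = (ℝ[G]/ℝv) \ ⋃_{g∈G} ℝ·π(g•w), and the restriction of π to Y is a homotopy equivalence from Y onto (ℝ[G]/ℝv) \ ⋃_{g∈G} ℝ·π(g•w). -/

import Mathlib

open scoped BigOperators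

/-- The group `G = (ℤ/pℤ)^k`, written multiplicatively. -/
abbrev Gpk (p k : ℕ) : Type := Multiplicative (Fin k → ZMod p)

/-- The real group algebra `ℝ[G]`. -/
abbrev RG (p k : ℕ) : Type := MonoidAlgebra ℝ (Gpk p k)

/-- The standard topology on `ℝ[G]` (finite dimensional, induced from `G → ℝ`). -/
noncomputable instance RG.topologicalSpace (p k : ℕ) [NeZero p] :
    TopologicalSpace (RG p k) :=
  TopologicalSpace.induced (MonoidAlgebra.coeffEquiv.trans Finsupp.equivFunOnFinite : RG p k ≃ (Gpk p k → ℝ))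
    inferInstance

/-- The left action of `g ∈ G` on `ℝ[G]` by left multiplication. -/
noncomputable def act (p k : ℕ) (g : Gpk p k) (x : RG p k) : RG p k :=
  MonoidAlgebra.of ℝ (Gpk p k) g * x


/-- The vector `v = Σ_{g ∈ G} g ∈ ℝ[G]`. -/
noncomputable def gSum (p k : ℕ) [NeZero p] : RG p k :=
  ∑ g : Gpk p k, MonoidAlgebra.of ℝ (Gpk p k) g

/-! Every `L_g` contains `v`, so `Y` is the full preimage under `π` of
`Z = (ℝ[G]/ℝv) \ ⋃_g ℝ·π(g•w)`. For a continuous linear map `π` with a continuous linear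
section `σ`, the restriction of `π` to a full preimage is a homotopy equivalence with homotopy
inverse `σ`: the straight-line homotopy from `σ ∘ π` to the identity stays inside the fibres
of `π`. A linear section of the quotient map exists and is continuous in finite dimension. -/

section RestrictPreimage

open ContinuousMap

variable {E F : Type*} [AddCommGroup E] [Module ℝ E] [TopologicalSpace E]
  [IsTopologicalAddGroup E] [ContinuousSMul ℝ E] [AddCommGroup F] [Module ℝ F] [TopologicalSpace F]

noncomputable def ContinuousLinearMap.restrictPreimageHomotopyEquiv (π : E →L[ℝ] F)
    (σ : F →L[ℝ] E) (hσ : Function.RightInverse σ π) (S : Set F) : π ⁻¹' S ≃ₕ S where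
  toFun := (π : C(E, F)).restrictPreimage S
  invFun := ⟨fun z => ⟨σ z, by simp [hσ z]⟩, by fun_prop⟩
  left_inv := by
    have hπ : ∀ (t : ℝ) (y : E), π (AffineMap.lineMap (σ (π y)) y t) = π y := fun t y => by
      rw [AffineMap.lineMap_apply_module, map_add, map_smul, map_smul, hσ, ← add_smul,
        sub_add_cancel, one_smul]
    exact ⟨{ toFun := fun q => ⟨AffineMap.lineMap (σ (π q.2)) q.2 (q.1 : ℝ),
                by rw [Set.mem_preimage, hπ]; exact q.2.2⟩
             continuous_toFun := by simp only [AffineMap.lineMap_apply_module]; fun_prop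
             map_zero_left := fun y => by ext; simp [ContinuousMap.restrictPreimage]
             map_one_left := fun y => by ext; simp }⟩
  right_inv := by
    convert Homotopic.refl _
    ext z
    exact (hσ z).symm

end RestrictPreimage

theorem Submodule.span_pair_eq_comap_mkQ {R M : Type*} [Ring R] [AddCommGroup M] [Module R M]
    (v u : M) :
    span R {v, u} = (span R {(span R {v}).mkQ u}).comap (span R {v}).mkQ := by
  rw [← Set.image_singleton, ← Submodule.map_span, Submodule.comap_map_mkQ,
    Submodule.span_insert]

section GroupAlgebraTopology

variable (p k : ℕ) [NeZero p]

noncomputable def RG.linearEquivFun : RG p k ≃ₗ[ℝ] (Gpk p k → ℝ) :=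
  (MonoidAlgebra.coeffLinearEquiv ℝ).trans (Finsupp.linearEquivFunOnFinite ℝ ℝ (Gpk p k))

theorem RG.isInducing_linearEquivFun : Topology.IsInducing (RG.linearEquivFun p k) := ⟨rfl⟩

instance : IsTopologicalAddGroup (RG p k) :=
  (RG.isInducing_linearEquivFun p k).topologicalAddGroup
    (RG.linearEquivFun p k).toLinearMap.toAddMonoidHom

instance : ContinuousSMul ℝ (RG p k) :=
  (RG.isInducing_linearEquivFun p k).continuousSMul continuous_id
    fun {c x} => map_smul (RG.linearEquivFun p k) c x

instance : T2Space (RG p k) :=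
  Topology.IsEmbedding.t2Space
    ⟨RG.isInducing_linearEquivFun p k, (RG.linearEquivFun p k).injective⟩

instance : FiniteDimensional ℝ (RG p k) := Module.Finite.equiv (RG.linearEquivFun p k).symm

end GroupAlgebraTopology

theorem projection_homotopy_equiv_general (p k : ℕ) [Fact p.Prime]
    (w : RG p k) :
    (Submodule.span ℝ {gSum p k}).mkQ ''
        (⋃ g : Gpk p k,
          (Submodule.span ℝ {gSum p k, act p k g w} : Set (RG p k)))ᶜ
      = (⋃ g : Gpk p k,
          (Submodule.span ℝ {(Submodule.span ℝ {gSum p k}).mkQ (act p k g w)} :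
            Set (RG p k ⧸ Submodule.span ℝ {gSum p k})))ᶜ ∧
    ∃ e : ContinuousMap.HomotopyEquiv
        (↥(⋃ g : Gpk p k,
            (Submodule.span ℝ {gSum p k, act p k g w} : Set (RG p k)))ᶜ)
        (↥(⋃ g : Gpk p k,
            (Submodule.span ℝ {(Submodule.span ℝ {gSum p k}).mkQ (act p k g w)} :
              Set (RG p k ⧸ Submodule.span ℝ {gSum p k})))ᶜ),
      ∀ y, (e.toFun y : RG p k ⧸ Submodule.span ℝ {gSum p k})
        = (Submodule.span ℝ {gSum p k}).mkQ (y : RG p k) := by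
  have : NeZero p := ⟨(Fact.out : p.Prime).ne_zero⟩
  set V := Submodule.span ℝ {gSum p k}
  set U := ⋃ g : Gpk p k, (Submodule.span ℝ {V.mkQ (act p k g w)} : Set (RG p k ⧸ V))
  have hY : (⋃ g : Gpk p k, (Submodule.span ℝ {gSum p k, act p k g w} : Set (RG p k)))ᶜ
      = V.mkQL ⁻¹' Uᶜ := by
    simp only [U, Set.preimage_compl, Set.preimage_iUnion, Submodule.span_pair_eq_comap_mkQ]
    rfl
  obtain ⟨σ, hσ⟩ := V.mkQ.exists_rightInverse_of_surjective (V.range_mkQ)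
  have : IsClosed (V : Set (RG p k)) := Submodule.closed_of_finiteDimensional V
  refine ⟨?_, (Homeomorph.setCongr hY).toHomotopyEquiv.trans
    (V.mkQL.restrictPreimageHomotopyEquiv (LinearMap.toContinuousLinearMap σ)
      (LinearMap.congr_fun hσ) Uᶜ), fun y => rfl⟩
  rw [hY]
  exact Set.image_preimage_eq _ V.mkQ_surjective

/-- **The projection away from `v` is a homotopy equivalence of the complements.**
Let `v = Σ_{g∈G} g`, let `w ∈ ℝ[G]` with `{v, w}` linearly independent, let
`L_g = span(v, g•w)` and `Y = ℝ[G] \ ⋃_g L_g`. Let `π : ℝ[G] → ℝ[G]/ℝv` be the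
quotient map. Then `π(Y) = (ℝ[G]/ℝv) \ ⋃_g ℝ·π(g•w)` and the restriction of `π` to
`Y` is a homotopy equivalence onto this set. -/
theorem projection_homotopy_equiv (p k : ℕ) [Fact p.Prime] (hk : 1 ≤ k)
    (w : RG p k) (hw : LinearIndependent ℝ ![gSum p k, w]) :
    (Submodule.span ℝ {gSum p k}).mkQ ''
        (⋃ g : Gpk p k,
          (Submodule.span ℝ {gSum p k, act p k g w} : Set (RG p k)))ᶜ
      = (⋃ g : Gpk p k,
          (Submodule.span ℝ {(Submodule.span ℝ {gSum p k}).mkQ (act p k g w)} :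
            Set (RG p k ⧸ Submodule.span ℝ {gSum p k})))ᶜ ∧
    ∃ e : ContinuousMap.HomotopyEquiv
        (↥(⋃ g : Gpk p k,
            (Submodule.span ℝ {gSum p k, act p k g w} : Set (RG p k)))ᶜ)
        (↥(⋃ g : Gpk p k,
            (Submodule.span ℝ {(Submodule.span ℝ {gSum p k}).mkQ (act p k g w)} :
              Set (RG p k ⧸ Submodule.span ℝ {gSum p k})))ᶜ),
      ∀ y, (e.toFun y : RG p k ⧸ Submodule.span ℝ {gSum p k})
        = (Submodule.span ℝ {gSum p k}).mkQ (y : RG p k) :=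
  projection_homotopy_equiv_general p k w
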